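/- Let A be an irreducible quasi-positive n×n real matrix and let Q = diag(q_1, …, q_n) be a real diagonal matrix. Then the function μ ↦ s(μA + Q) is convex on (0, ∞); moreover it is strictly convex on (0, ∞) (i.e., s((tμ_1 + (1−t)μ_2)A + Q) < t·s(μ_1 A + Q) + (1−t)·s(μ_2 A + Q) for all distinct μ_1, μ_2 > 0 and t ∈ (0,1)) if and only if the q_i are not all equal. -/

import Mathlib

open Matrix Filter

/-- The spectral bound of a real square matrix: the maximum of the real parts of its
complex eigenvalues. -/
noncomputable def specBound {n : ℕ} (M : Matrix (Fin n) (Fin n) ℝ) : ℝ :=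
  sSup (Complex.re '' spectrum ℂ (M.map Complex.ofReal))

/-- The spectral radius of a real square matrix: the maximum of the absolute values of its
complex eigenvalues. -/
noncomputable def specRad {n : ℕ} (M : Matrix (Fin n) (Fin n) ℝ) : ℝ :=
  sSup ((fun z : ℂ => ‖z‖) '' spectrum ℂ (M.map Complex.ofReal))

/-- A matrix is irreducible if for every nonempty proper subset `S` of indices there are
`i ∉ S` and `j ∈ S` with `A i j ≠ 0`. -/
def MatIrreducible {n : ℕ} (A : Matrix (Fin n) (Fin n) ℝ) : Prop :=
  ∀ S : Finset (Fin n), S.Nonempty → S ≠ Finset.univ →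
    ∃ i ∉ S, ∃ j ∈ S, A i j ≠ 0

/-- eigenvalue characterization of the complex spectrum of a real matrix -/
lemma mem_cspec_iff {n : ℕ} (B : Matrix (Fin n) (Fin n) ℝ) (z : ℂ) :
    z ∈ spectrum ℂ (B.map Complex.ofReal) ↔
      ∃ w : Fin n → ℂ, w ≠ 0 ∧ (B.map Complex.ofReal) *ᵥ w = z • w := by
  rw [spectrum.mem_iff, Algebra.algebraMap_eq_smul_one, Matrix.isUnit_iff_isUnit_det,
    isUnit_iff_ne_zero, not_ne_iff, ← Matrix.exists_mulVec_eq_zero_iff]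
  constructor
  · rintro ⟨w, hw, h⟩
    refine ⟨w, hw, ?_⟩
    have := h
    rw [Matrix.sub_mulVec, Matrix.smul_mulVec, Matrix.one_mulVec, sub_eq_zero] at this
    exact this.symm
  · rintro ⟨w, hw, h⟩
    refine ⟨w, hw, ?_⟩
    rw [Matrix.sub_mulVec, Matrix.smul_mulVec, Matrix.one_mulVec, sub_eq_zero, h]

/-- unfolded version -/
lemma mem_cspec_iff' {n : ℕ} (B : Matrix (Fin n) (Fin n) ℝ) (z : ℂ) :
    z ∈ spectrum ℂ (B.map Complex.ofReal) ↔
      ∃ w : Fin n → ℂ, w ≠ 0 ∧ ∀ i, ∑ j, (B i j : ℂ) * w j = z * w i := by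
  rw [mem_cspec_iff]
  constructor
  · rintro ⟨w, hw, h⟩
    exact ⟨w, hw, fun i => by
      have := congrFun h i
      simpa [Matrix.mulVec, dotProduct, Matrix.map_apply] using this⟩
  · rintro ⟨w, hw, h⟩
    refine ⟨w, hw, funext fun i => ?_⟩
    simpa [Matrix.mulVec, dotProduct, Matrix.map_apply] using h i

lemma irr_transpose {n : ℕ} {B : Matrix (Fin n) (Fin n) ℝ} (h : MatIrreducible B) :
    MatIrreducible Bᵀ := by
  intro S hS hSne
  have hc : Sᶜ.Nonempty := by
    rw [← Finset.card_pos, Finset.card_compl, tsub_pos_iff_lt]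
    refine lt_of_le_of_ne (Finset.card_le_univ S) fun hc => hSne ?_
    exact Finset.eq_univ_of_card S (by simpa using hc)
  have hcne : Sᶜ ≠ Finset.univ := by
    intro hC
    obtain ⟨j, hj⟩ := hS
    have : j ∈ Sᶜ := hC ▸ Finset.mem_univ j
    simp [Finset.mem_compl, hj] at this
  obtain ⟨i, hiS, j, hjS, hij⟩ := h Sᶜ hc hcne
  refine ⟨j, Finset.mem_compl.mp hjS, i, by simpa using hiS, by simpa [Matrix.transpose_apply] using hij⟩


lemma pow_mulVec_pos {n : ℕ} {M : Matrix (Fin n) (Fin n) ℝ}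
    (hM : ∀ i j, 0 ≤ M i j) (hd : ∀ i, 0 < M i i) (hirr : MatIrreducible M)
    {x : Fin n → ℝ} (hx : ∀ i, 0 ≤ x i) (hx0 : x ≠ 0) :
    ∀ i, 0 < (M ^ (n - 1) *ᵥ x) i := by
  classical
  set supp : (Fin n → ℝ) → Finset (Fin n) := fun y => Finset.univ.filter (fun i => y i ≠ 0)
    with hsupp
  -- one step
  have step : ∀ y : Fin n → ℝ, (∀ i, 0 ≤ y i) → y ≠ 0 →
      (∀ i, 0 ≤ (M *ᵥ y) i) ∧ (M *ᵥ y) ≠ 0 ∧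
        min n ((supp y).card + 1) ≤ (supp (M *ᵥ y)).card := by
    intro y hy hy0
    have hmono : ∀ i, y i ≠ 0 → (M *ᵥ y) i ≠ 0 := by
      intro i hyi
      have hyi' : 0 < y i := lt_of_le_of_ne (hy i) (Ne.symm hyi)
      have : 0 < M i i * y i := mul_pos (hd i) hyi'
      have hle : M i i * y i ≤ ∑ j, M i j * y j :=
        Finset.single_le_sum (f := fun j => M i j * y j)
          (fun j _ => mul_nonneg (hM i j) (hy j)) (Finset.mem_univ i)
      have : 0 < (M *ᵥ y) i := by
        simpa [Matrix.mulVec, dotProduct] using lt_of_lt_of_le this hle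
      exact ne_of_gt this
    have hnon : ∀ i, 0 ≤ (M *ᵥ y) i := by
      intro i
      simp only [Matrix.mulVec, dotProduct]
      exact Finset.sum_nonneg fun j _ => mul_nonneg (hM i j) (hy j)
    have hsub : supp y ⊆ supp (M *ᵥ y) := by
      intro i hi
      simp only [hsupp, Finset.mem_filter, Finset.mem_univ, true_and] at hi ⊢
      exact hmono i hi
    have hyne : (supp y).Nonempty := by
      obtain ⟨i, hi⟩ := Function.ne_iff.mp hy0
      have hi' : y i ≠ 0 := by simpa using hi
      exact ⟨i, by simp [hsupp, hi']⟩
    have hMy0 : (M *ᵥ y) ≠ 0 := by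
      obtain ⟨i, hi⟩ := hyne
      simp only [hsupp, Finset.mem_filter, Finset.mem_univ, true_and] at hi
      exact Function.ne_iff.mpr ⟨i, hmono i hi⟩
    refine ⟨hnon, hMy0, ?_⟩
    by_cases hu : supp y = Finset.univ
    · have h1 : supp (M *ᵥ y) = Finset.univ :=
        Finset.univ_subset_iff.mp (hu ▸ hsub)
      rw [h1, Finset.card_univ, Fintype.card_fin]
      exact min_le_left _ _
    · obtain ⟨i0, hi0, j0, hj0, hij0⟩ := hirr (supp y) hyne hu
      have hij0' : i0 ≠ j0 := by rintro rfl; exact hi0 hj0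
      have hyj0 : 0 < y j0 := by
        simp only [hsupp, Finset.mem_filter, Finset.mem_univ, true_and] at hj0
        exact lt_of_le_of_ne (hy j0) (Ne.symm hj0)
      have hMi0 : 0 < (M *ᵥ y) i0 := by
        have h1 : 0 < M i0 j0 * y j0 :=
          mul_pos (lt_of_le_of_ne (hM i0 j0) (Ne.symm hij0)) hyj0
        have hle : M i0 j0 * y j0 ≤ ∑ j, M i0 j * y j :=
          Finset.single_le_sum (f := fun j => M i0 j * y j)
            (fun j _ => mul_nonneg (hM i0 j) (hy j)) (Finset.mem_univ j0)
        simpa [Matrix.mulVec, dotProduct] using lt_of_lt_of_le h1 hle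
      have hins : insert i0 (supp y) ⊆ supp (M *ᵥ y) := by
        intro i hi
        rcases Finset.mem_insert.mp hi with rfl | hi
        · simp [hsupp, ne_of_gt hMi0]
        · exact hsub hi
      have hcard : (supp y).card + 1 ≤ (supp (M *ᵥ y)).card := by
        have := Finset.card_le_card hins
        rwa [Finset.card_insert_of_notMem hi0] at this
      exact le_trans (min_le_right _ _) hcard
  -- iterate
  have claim : ∀ k, ∀ y : Fin n → ℝ, (∀ i, 0 ≤ y i) → y ≠ 0 →
      (∀ i, 0 ≤ (M ^ k *ᵥ y) i) ∧ (M ^ k *ᵥ y) ≠ 0 ∧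
        min n ((supp y).card + k) ≤ (supp (M ^ k *ᵥ y)).card := by
    intro k
    induction k with
    | zero =>
      intro y hy hy0
      simp only [pow_zero, Matrix.one_mulVec]
      exact ⟨hy, hy0, le_trans (min_le_right _ _) (by omega)⟩
    | succ k ih =>
      intro y hy hy0
      obtain ⟨h1, h2, h3⟩ := step y hy hy0
      obtain ⟨g1, g2, g3⟩ := ih (M *ᵥ y) h1 h2
      have heq : M ^ (k + 1) *ᵥ y = M ^ k *ᵥ (M *ᵥ y) := by
        rw [Matrix.mulVec_mulVec, ← pow_succ]
      rw [heq]
      refine ⟨g1, g2, ?_⟩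
      refine le_trans ?_ g3
      have hcy : (supp (M *ᵥ y)).card ≤ n := le_trans (Finset.card_le_univ _) (by simp)
      omega
  obtain ⟨h1, _, h3⟩ := claim (n - 1) x hx hx0
  have hx1 : 1 ≤ (supp x).card := by
    obtain ⟨i, hi⟩ := Function.ne_iff.mp hx0
    have hi' : x i ≠ 0 := by simpa using hi
    exact Finset.card_pos.mpr ⟨i, by simp [hsupp, hi']⟩
  have hn : 0 < n := Fin.pos_iff_nonempty.mpr ⟨(Function.ne_iff.mp hx0).choose⟩
  have hall : supp (M ^ (n - 1) *ᵥ x) = Finset.univ := by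
    apply Finset.eq_univ_of_card
    have hcy : (supp (M ^ (n - 1) *ᵥ x)).card ≤ n :=
      le_trans (Finset.card_le_univ _) (by simp)
    simp only [Fintype.card_fin]
    omega
  intro i
  have : i ∈ supp (M ^ (n - 1) *ᵥ x) := hall ▸ Finset.mem_univ i
  simp only [hsupp, Finset.mem_filter, Finset.mem_univ, true_and] at this
  exact lt_of_le_of_ne (h1 i) (Ne.symm this)

lemma pf_nonneg {n : ℕ} (hn : 0 < n) {M : Matrix (Fin n) (Fin n) ℝ}
    (hM : ∀ i j, 0 ≤ M i j) (hd : ∀ i, 0 < M i i) (hirr : MatIrreducible M) :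
    ∃ (ρ : ℝ) (u : Fin n → ℝ), (∀ i, 0 < u i) ∧ M *ᵥ u = ρ • u := by
  classical
  haveI : Nonempty (Fin n) := Fin.pos_iff_nonempty.mp hn
  set N := M ^ (n - 1) with hN
  have hNpos : ∀ y : Fin n → ℝ, (∀ i, 0 ≤ y i) → y ≠ 0 → ∀ i, 0 < (N *ᵥ y) i :=
    fun y hy hy0 => pow_mulVec_pos hM hd hirr hy hy0
  set Δ := stdSimplex ℝ (Fin n) with hΔ
  have hΔmem : ∀ x ∈ Δ, (∀ i, 0 ≤ x i) ∧ ∑ i, x i = 1 := fun x hx => hx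
  have hΔne : Δ.Nonempty := by
    refine ⟨fun _ => (n : ℝ)⁻¹, fun i => by positivity, ?_⟩
    simp only [Finset.sum_const, Finset.card_univ, Fintype.card_fin, nsmul_eq_mul]
    field_simp
  have hΔ0 : ∀ x ∈ Δ, x ≠ 0 := by
    intro x hx h0
    have := (hΔmem x hx).2
    rw [h0] at this
    simp at this
  -- the normalizing map
  set g : (Fin n → ℝ) → ℝ := fun x => ∑ i, (N *ᵥ x) i with hg
  have hgpos : ∀ x ∈ Δ, 0 < g x := fun x hx =>
    Finset.sum_pos (fun i _ => hNpos x (hΔmem x hx).1 (hΔ0 x hx) i) Finset.univ_nonempty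
  set T : (Fin n → ℝ) → (Fin n → ℝ) := fun x => (g x)⁻¹ • (N *ᵥ x) with hT
  have hcoord : ∀ (P : Matrix (Fin n) (Fin n) ℝ) (i : Fin n),
      Continuous fun x : Fin n → ℝ => (P *ᵥ x) i := by
    intro P i
    simp only [Matrix.mulVec, dotProduct]
    exact continuous_finset_sum _ fun j _ => (continuous_const.mul (continuous_apply j))
  have hgc : Continuous g := continuous_finset_sum _ fun i _ => hcoord N i
  have hTc : ContinuousOn T Δ := by
    refine ContinuousOn.smul ((hgc.continuousOn).inv₀ fun x hx => ne_of_gt (hgpos x hx)) ?_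
    exact (continuous_pi fun i => hcoord N i).continuousOn
  set K := T '' Δ with hK
  have hKcp : IsCompact K := ((isCompact_stdSimplex ℝ (Fin n)).image_of_continuousOn hTc)
  have hKne : K.Nonempty := hΔne.image T
  have hKpos : ∀ y ∈ K, ∀ i, 0 < y i := by
    rintro y ⟨x, hx, rfl⟩ i
    exact mul_pos (inv_pos.mpr (hgpos x hx)) (hNpos x (hΔmem x hx).1 (hΔ0 x hx) i)
  have hKΔ : K ⊆ Δ := by
    rintro y ⟨x, hx, rfl⟩
    refine ⟨fun i => le_of_lt (hKpos _ ⟨x, hx, rfl⟩ i), ?_⟩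
    simp only [hT, Pi.smul_apply, smul_eq_mul, ← Finset.mul_sum]
    exact inv_mul_cancel₀ (ne_of_gt (hgpos x hx))
  -- the Collatz–Wielandt function
  set r : (Fin n → ℝ) → ℝ :=
    fun y => Finset.univ.inf' Finset.univ_nonempty (fun i => (M *ᵥ y) i / y i) with hr
  have hrc : ContinuousOn r {y : Fin n → ℝ | ∀ i, 0 < y i} := by
    refine ContinuousOn.finset_inf'_apply Finset.univ_nonempty fun i _ => ?_
    exact ContinuousOn.div ((hcoord M i).continuousOn)
      ((continuous_apply i).continuousOn) (fun y hy => ne_of_gt (hy i))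
  obtain ⟨u, huK, hmax⟩ := hKcp.exists_isMaxOn hKne (hrc.mono hKpos)
  have hu : ∀ i, 0 < u i := hKpos u huK
  have hu0 : u ≠ 0 := fun h => by simpa [h] using hu (Classical.arbitrary (Fin n))
  set ρ := r u with hρ
  have hge : ∀ i, ρ * u i ≤ (M *ᵥ u) i := by
    intro i
    have h1 : ρ ≤ (M *ᵥ u) i / u i := Finset.inf'_le _ (Finset.mem_univ i)
    exact (le_div_iff₀ (hu i)).mp h1
  have heq : M *ᵥ u = ρ • u := by
    by_contra hcon
    set d : Fin n → ℝ := M *ᵥ u - ρ • u with hdd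
    have hd0 : d ≠ 0 := sub_ne_zero.mpr hcon
    have hdnn : ∀ i, 0 ≤ d i := fun i => by
      simp only [hdd, Pi.sub_apply, Pi.smul_apply, smul_eq_mul, sub_nonneg]
      exact hge i
    have hNd : ∀ i, 0 < (N *ᵥ d) i := hNpos d hdnn hd0
    set w : Fin n → ℝ := N *ᵥ u with hw
    have hwpos : ∀ i, 0 < w i := hNpos u (fun i => le_of_lt (hu i)) hu0
    have hNdval : N *ᵥ d = M *ᵥ w - ρ • w := by
      rw [hdd, Matrix.mulVec_sub, Matrix.mulVec_smul, hw,
        Matrix.mulVec_mulVec, Matrix.mulVec_mulVec, pow_mul_comm']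
    have hlt : ∀ i, ρ * w i < (M *ᵥ w) i := by
      intro i
      have := hNd i
      rw [hNdval] at this
      simp only [Pi.sub_apply, Pi.smul_apply, smul_eq_mul, sub_pos] at this
      exact this
    -- y := T u beats u
    have huΔ : u ∈ Δ := hKΔ huK
    have hyK : T u ∈ K := ⟨u, huΔ, rfl⟩
    have hrated : ∀ i, (M *ᵥ T u) i / (T u) i = (M *ᵥ w) i / w i := by
      intro i
      have hc : (0:ℝ) < (g u)⁻¹ := inv_pos.mpr (hgpos u huΔ)
      have h1 : T u = (g u)⁻¹ • w := rfl
      rw [h1, Matrix.mulVec_smul]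
      simp only [Pi.smul_apply, smul_eq_mul]
      rw [mul_div_mul_left _ _ (ne_of_gt hc)]
    have hry : ρ < r (T u) := by
      rw [hr]
      rw [Finset.lt_inf'_iff]
      intro i _
      rw [hrated i]
      exact (lt_div_iff₀ (hwpos i)).mpr (hlt i)
    have : r (T u) ≤ ρ := hmax hyK
    linarith
  exact ⟨ρ, u, hu, heq⟩

lemma pf_quasi {n : ℕ} (hn : 0 < n) {B : Matrix (Fin n) (Fin n) ℝ}
    (hqp : ∀ i j, i ≠ j → 0 ≤ B i j) (hirr : MatIrreducible B) :
    ∃ (s : ℝ) (u v : Fin n → ℝ), (∀ i, 0 < u i) ∧ (∀ i, 0 < v i) ∧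
      B *ᵥ u = s • u ∧ Bᵀ *ᵥ v = s • v ∧
      ∀ z ∈ spectrum ℂ (B.map Complex.ofReal), z.re ≤ s := by
  classical
  haveI : Nonempty (Fin n) := Fin.pos_iff_nonempty.mp hn
  set c : ℝ := 1 + ∑ i, |B i i| with hc
  set M : Matrix (Fin n) (Fin n) ℝ := B + c • 1 with hMdef
  have hMentry : ∀ i j, M i j = B i j + if i = j then c else 0 := by
    intro i j
    simp [hMdef, Matrix.add_apply, Matrix.smul_apply, Matrix.one_apply, smul_eq_mul,
      mul_ite, mul_one, mul_zero]
  have habs : ∀ i, |B i i| ≤ ∑ j, |B j j| :=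
    fun i => Finset.single_le_sum (f := fun j => |B j j|) (fun j _ => abs_nonneg _)
      (Finset.mem_univ i)
  have hMd : ∀ i, 0 < M i i := by
    intro i
    rw [hMentry i i, if_pos rfl, hc]
    have h1 : -B i i ≤ |B i i| := neg_le_abs _
    have := habs i
    linarith
  have hMnn : ∀ i j, 0 ≤ M i j := by
    intro i j
    rcases eq_or_ne i j with rfl | hij
    · exact le_of_lt (hMd i)
    · rw [hMentry i j, if_neg hij, add_zero]
      exact hqp i j hij
  have hMoff : ∀ i j, i ≠ j → M i j = B i j := fun i j hij => by
    rw [hMentry i j, if_neg hij, add_zero]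
  have hMirr : MatIrreducible M := by
    intro S hS hSne
    obtain ⟨i, hiS, j, hjS, hij⟩ := hirr S hS hSne
    have hne : i ≠ j := fun h => hiS (h ▸ hjS)
    exact ⟨i, hiS, j, hjS, by rwa [hMoff i j hne]⟩
  obtain ⟨ρ, u, hu, hMu⟩ := pf_nonneg hn hMnn hMd hMirr
  -- transpose
  have hMT : Mᵀ = Bᵀ + c • 1 := by
    rw [hMdef, Matrix.transpose_add, Matrix.transpose_smul, Matrix.transpose_one]
  have hMTd : ∀ i, 0 < Mᵀ i i := fun i => by simpa [Matrix.transpose_apply] using hMd i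
  have hMTnn : ∀ i j, 0 ≤ Mᵀ i j := fun i j => hMnn j i
  obtain ⟨ρ', v, hv, hMv⟩ := pf_nonneg hn hMTnn hMTd (irr_transpose hMirr)
  -- equal eigenvalues
  have hdot : ρ * (v ⬝ᵥ u) = ρ' * (v ⬝ᵥ u) := by
    have h1 : v ⬝ᵥ (M *ᵥ u) = ρ * (v ⬝ᵥ u) := by rw [hMu]; simp [dotProduct_smul]
    have h2 : v ⬝ᵥ (M *ᵥ u) = ρ' * (v ⬝ᵥ u) := by
      rw [Matrix.dotProduct_mulVec, ← Matrix.mulVec_transpose, hMv]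
      simp [smul_dotProduct]
    rw [← h1, h2]
  have hvu : 0 < v ⬝ᵥ u :=
    Finset.sum_pos (fun i _ => mul_pos (hv i) (hu i)) Finset.univ_nonempty
  have hρρ : ρ = ρ' := by
    have := hdot
    exact mul_right_cancel₀ (ne_of_gt hvu) this
  set s : ℝ := ρ - c with hs
  have hBu : B *ᵥ u = s • u := by
    have : M *ᵥ u = B *ᵥ u + c • u := by
      rw [hMdef, Matrix.add_mulVec, Matrix.smul_mulVec, Matrix.one_mulVec]
    rw [this] at hMu
    funext i
    have := congrFun hMu i
    simp only [Pi.add_apply, Pi.smul_apply, smul_eq_mul] at this ⊢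
    rw [hs]; linarith
  have hBv : Bᵀ *ᵥ v = s • v := by
    have : Mᵀ *ᵥ v = Bᵀ *ᵥ v + c • v := by
      rw [hMT, Matrix.add_mulVec, Matrix.smul_mulVec, Matrix.one_mulVec]
    rw [this, ← hρρ] at hMv
    funext i
    have := congrFun hMv i
    simp only [Pi.add_apply, Pi.smul_apply, smul_eq_mul] at this ⊢
    rw [hs]; linarith
  refine ⟨s, u, v, hu, hv, hBu, hBv, ?_⟩
  -- dominance
  intro z hz
  obtain ⟨w, hw0, hweq⟩ := (mem_cspec_iff' B z).mp hz
  set a : Fin n → ℝ := fun i => ‖w i‖ with ha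
  set β : ℝ := ‖z + (c : ℂ)‖ with hβ
  have hann : ∀ i, 0 ≤ a i := fun i => norm_nonneg _
  have hkey : ∀ i, β * a i ≤ ∑ j, M i j * a j := by
    intro i
    have hMij : ∀ j, (M i j : ℂ) = (B i j : ℂ) + if i = j then (c : ℂ) else 0 := by
      intro j
      rw [hMentry i j]
      rcases eq_or_ne i j with rfl | hij
      · simp
      · simp [hij]
    have h1 : ∑ j, (M i j : ℂ) * w j = (z + c) * w i := by
      calc ∑ j, (M i j : ℂ) * w j
          = ∑ j, ((B i j : ℂ) * w j + (if i = j then (c : ℂ) else 0) * w j) := by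
            refine Finset.sum_congr rfl fun j _ => ?_
            rw [hMij j, add_mul]
        _ = (∑ j, (B i j : ℂ) * w j) + ∑ j, (if i = j then (c : ℂ) else 0) * w j :=
            Finset.sum_add_distrib
        _ = z * w i + (c : ℂ) * w i := by
            rw [hweq i]
            congr 1
            simp [ite_mul]
        _ = (z + c) * w i := by ring
    calc β * a i = ‖(z + (c : ℂ)) * w i‖ := by rw [norm_mul]
      _ = ‖∑ j, (M i j : ℂ) * w j‖ := by rw [h1]
      _ ≤ ∑ j, ‖(M i j : ℂ) * w j‖ := norm_sum_le _ _
      _ = ∑ j, M i j * a j := by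
          refine Finset.sum_congr rfl fun j _ => ?_
          rw [norm_mul, Complex.norm_real, Real.norm_of_nonneg (hMnn i j)]
  have hdom2 : β * (v ⬝ᵥ a) ≤ ρ * (v ⬝ᵥ a) := by
    have h1 : ∀ i, v i * (β * a i) ≤ v i * (M *ᵥ a) i := fun i =>
      mul_le_mul_of_nonneg_left (by simpa [Matrix.mulVec, dotProduct] using hkey i)
        (le_of_lt (hv i))
    have h2 : v ⬝ᵥ (M *ᵥ a) = ρ * (v ⬝ᵥ a) := by
      rw [Matrix.dotProduct_mulVec, ← Matrix.mulVec_transpose, hMv, ← hρρ]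
      simp [smul_dotProduct]
    calc β * (v ⬝ᵥ a) = ∑ i, v i * (β * a i) := by
          simp only [dotProduct, Finset.mul_sum]
          exact Finset.sum_congr rfl fun i _ => by ring
      _ ≤ ∑ i, v i * (M *ᵥ a) i := Finset.sum_le_sum fun i _ => h1 i
      _ = ρ * (v ⬝ᵥ a) := h2
  have hva : 0 < v ⬝ᵥ a := by
    obtain ⟨i0, hi0⟩ := Function.ne_iff.mp hw0
    have hwi0 : w i0 ≠ 0 := by simpa using hi0
    have hai0 : 0 < a i0 := by
      rw [ha]
      exact norm_pos_iff.mpr hwi0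
    refine Finset.sum_pos' (fun i _ => mul_nonneg (le_of_lt (hv i)) (hann i)) ?_
    exact ⟨i0, Finset.mem_univ i0, mul_pos (hv i0) hai0⟩
  have habsle : β ≤ ρ := le_of_mul_le_mul_right (by linarith [hdom2]) hva
  have hre : (z + (c : ℂ)).re ≤ β := Complex.re_le_norm _
  have hzre : (z + (c : ℂ)).re = z.re + c := by simp
  rw [hs]
  linarith

lemma specBound_eq {n : ℕ} {B : Matrix (Fin n) (Fin n) ℝ} {s : ℝ} {u : Fin n → ℝ}
    (hu : ∀ i, 0 < u i) (hu0 : u ≠ 0) (hBu : B *ᵥ u = s • u)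
    (hdom : ∀ z ∈ spectrum ℂ (B.map Complex.ofReal), z.re ≤ s) :
    specBound B = s := by
  have hmem : (s : ℂ) ∈ spectrum ℂ (B.map Complex.ofReal) := by
    rw [mem_cspec_iff']
    refine ⟨fun i => (u i : ℂ), ?_, ?_⟩
    · obtain ⟨i, hi⟩ := Function.ne_iff.mp hu0
      have : u i ≠ 0 := by simpa using hi
      exact Function.ne_iff.mpr ⟨i, by simpa using Complex.ofReal_ne_zero.mpr this⟩
    · intro i
      have h1 : ∑ j, B i j * u j = s * u i := by
        have := congrFun hBu i
        simpa [Matrix.mulVec, dotProduct] using this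
      calc ∑ j, (B i j : ℂ) * (u j : ℂ) = ((∑ j, B i j * u j : ℝ) : ℂ) := by push_cast; rfl
        _ = ((s * u i : ℝ) : ℂ) := by rw [h1]
        _ = (s : ℂ) * (u i : ℂ) := by push_cast; rfl
  apply IsGreatest.csSup_eq
  constructor
  · exact ⟨(s : ℂ), hmem, Complex.ofReal_re s⟩
  · rintro y ⟨z, hzmem, rfl⟩
    exact hdom z hzmem

lemma dv {n : ℕ} {B : Matrix (Fin n) (Fin n) ℝ} (hqp : ∀ i j, i ≠ j → 0 ≤ B i j)
    (hirr : MatIrreducible B) {s : ℝ} {u v x : Fin n → ℝ}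
    (hu : ∀ i, 0 < u i) (hv : ∀ i, 0 < v i) (hx : ∀ i, 0 < x i)
    (hBu : B *ᵥ u = s • u) (hBv : Bᵀ *ᵥ v = s • v) :
    s * (∑ i, v i * u i) ≤ ∑ i, (v i * u i) * ((B *ᵥ x) i / x i) ∧
      (s * (∑ i, v i * u i) = ∑ i, (v i * u i) * ((B *ᵥ x) i / x i) →
        ∃ d : ℝ, 0 < d ∧ ∀ i, x i = d * u i) := by
  classical
  set w : Fin n → ℝ := fun i => Real.log (x i / u i) with hw
  set F : Fin n → Fin n → ℝ := fun i j => v i * B i j * x j * u i / x i with hF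
  set G : Fin n → Fin n → ℝ := fun i j => v i * B i j * u j * (1 + w j - w i) with hG
  have hrow_u : ∀ i, ∑ j, B i j * u j = s * u i := fun i => by
    have := congrFun hBu i
    simpa [Matrix.mulVec, dotProduct] using this
  have hcol_v : ∀ j, ∑ i, B i j * v i = s * v j := fun j => by
    have := congrFun hBv j
    simpa [Matrix.mulVec, dotProduct, Matrix.transpose_apply] using this
  -- pointwise bounds
  have hdiag : ∀ i, G i i = F i i := by
    intro i
    simp only [hF, hG]
    have hxi : x i ≠ 0 := ne_of_gt (hx i)
    field_simp
    ring
  have hoffval : ∀ i j, B i j ≠ 0 → i ≠ j →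
      F i j = (v i * B i j * u j) * ((x j * u i) / (u j * x i)) ∧
      Real.log ((x j * u i) / (u j * x i)) = w j - w i ∧
      0 < (x j * u i) / (u j * x i) ∧ 0 < v i * B i j * u j := by
    intro i j hBij hij
    have hBpos : 0 < B i j := lt_of_le_of_ne (hqp i j hij) (Ne.symm hBij)
    have ht : 0 < (x j * u i) / (u j * x i) :=
      div_pos (mul_pos (hx j) (hu i)) (mul_pos (hu j) (hx i))
    refine ⟨?_, ?_, ht, mul_pos (mul_pos (hv i) hBpos) (hu j)⟩
    · have h1 : u j ≠ 0 := ne_of_gt (hu j)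
      have h2 : x i ≠ 0 := ne_of_gt (hx i)
      simp only [hF]
      field_simp
    · rw [Real.log_div (ne_of_gt (mul_pos (hx j) (hu i))) (ne_of_gt (mul_pos (hu j) (hx i))),
        Real.log_mul (ne_of_gt (hx j)) (ne_of_gt (hu i)),
        Real.log_mul (ne_of_gt (hu j)) (ne_of_gt (hx i)), hw]
      simp only [Real.log_div (ne_of_gt (hx j)) (ne_of_gt (hu j)),
        Real.log_div (ne_of_gt (hx i)) (ne_of_gt (hu i))]
      ring
  have hkey : ∀ i j, G i j ≤ F i j := by
    intro i j
    rcases eq_or_ne i j with rfl | hij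
    · exact le_of_eq (hdiag i)
    rcases eq_or_ne (B i j) 0 with hB0 | hB0
    · simp [hF, hG, hB0]
    obtain ⟨hFval, hlog, ht, hc⟩ := hoffval i j hB0 hij
    rw [hFval]
    simp only [hG]
    have hle : 1 + (w j - w i) ≤ (x j * u i) / (u j * x i) := by
      have := Real.log_le_sub_one_of_pos ht
      rw [hlog] at this
      linarith
    calc v i * B i j * u j * (1 + w j - w i)
        = (v i * B i j * u j) * (1 + (w j - w i)) := by ring
      _ ≤ (v i * B i j * u j) * ((x j * u i) / (u j * x i)) :=
          mul_le_mul_of_nonneg_left hle (le_of_lt hc)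
  have hstrict : ∀ i j, i ≠ j → B i j ≠ 0 → w i ≠ w j → G i j < F i j := by
    intro i j hij hB0 hwij
    obtain ⟨hFval, hlog, ht, hc⟩ := hoffval i j hB0 hij
    rw [hFval]
    simp only [hG]
    have ht1 : (x j * u i) / (u j * x i) ≠ 1 := by
      intro h1
      apply hwij
      have := hlog
      rw [h1, Real.log_one] at this
      linarith
    have hlt : 1 + (w j - w i) < (x j * u i) / (u j * x i) := by
      have := Real.log_lt_sub_one_of_pos ht ht1
      rw [hlog] at this
      linarith
    calc v i * B i j * u j * (1 + w j - w i)
        = (v i * B i j * u j) * (1 + (w j - w i)) := by ring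
      _ < (v i * B i j * u j) * ((x j * u i) / (u j * x i)) :=
          (mul_lt_mul_iff_right₀ hc).mpr hlt
  -- sum of G
  have hsumG : ∑ i, ∑ j, G i j = s * ∑ i, v i * u i := by
    have hGsplit : ∀ i j, G i j = v i * (B i j * u j) + (B i j * v i) * (u j * w j)
        - (v i * w i) * (B i j * u j) := by
      intro i j; simp only [hG]; ring
    have h1 : ∑ i, ∑ j, G i j = (∑ i, ∑ j, v i * (B i j * u j))
        + (∑ i, ∑ j, (B i j * v i) * (u j * w j))
        - ∑ i, ∑ j, (v i * w i) * (B i j * u j) := by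
      simp only [hGsplit, Finset.sum_sub_distrib, Finset.sum_add_distrib]
    have hS1 : ∑ i, ∑ j, v i * (B i j * u j) = s * ∑ i, v i * u i := by
      rw [Finset.mul_sum]
      refine Finset.sum_congr rfl fun i _ => ?_
      rw [← Finset.mul_sum, hrow_u i]; ring
    have hS2 : ∑ i, ∑ j, (B i j * v i) * (u j * w j)
        = ∑ j, (s * v j) * (u j * w j) := by
      rw [Finset.sum_comm]
      refine Finset.sum_congr rfl fun j _ => ?_
      rw [← Finset.sum_mul, hcol_v j]
    have hS3 : ∑ i, ∑ j, (v i * w i) * (B i j * u j)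
        = ∑ i, (v i * w i) * (s * u i) := by
      refine Finset.sum_congr rfl fun i _ => ?_
      rw [← Finset.mul_sum, hrow_u i]
    have hS23 : ∑ j, (s * v j) * (u j * w j) = ∑ i, (v i * w i) * (s * u i) :=
      Finset.sum_congr rfl fun i _ => by ring
    rw [h1, hS1, hS2, hS3, hS23]
    ring
  -- sum of F
  have hsumF : ∑ i, ∑ j, F i j = ∑ i, (v i * u i) * ((B *ᵥ x) i / x i) := by
    refine Finset.sum_congr rfl fun i _ => ?_
    have h1 : ∀ j, F i j = (v i * u i / x i) * (B i j * x j) := by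
      intro j; simp only [hF]; ring
    rw [Finset.sum_congr rfl fun j _ => h1 j, ← Finset.mul_sum]
    have h2 : (B *ᵥ x) i = ∑ j, B i j * x j := by
      simp [Matrix.mulVec, dotProduct]
    rw [h2]
    ring
  have hmain : s * (∑ i, v i * u i) ≤ ∑ i, (v i * u i) * ((B *ᵥ x) i / x i) := by
    rw [← hsumG, ← hsumF]
    exact Finset.sum_le_sum fun i _ => Finset.sum_le_sum fun j _ => hkey i j
  refine ⟨hmain, fun heq => ?_⟩
  -- equality case
  have hww : ∀ i j, i ≠ j → B i j ≠ 0 → w i = w j := by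
    by_contra hcon
    push_neg at hcon
    obtain ⟨i0, j0, hij0, hB0, hw0⟩ := hcon
    have hlt : ∑ i, ∑ j, G i j < ∑ i, ∑ j, F i j := by
      rw [← Finset.sum_product', ← Finset.sum_product']
      refine Finset.sum_lt_sum (fun p _ => hkey p.1 p.2) ?_
      exact ⟨(i0, j0), Finset.mem_product.mpr ⟨Finset.mem_univ _, Finset.mem_univ _⟩,
        hstrict i0 j0 hij0 hB0 hw0⟩
    rw [hsumG, hsumF] at hlt
    rw [heq] at hlt
    exact lt_irrefl _ hlt
  rcases isEmpty_or_nonempty (Fin n) with hemp | hne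
  · exact ⟨1, one_pos, fun i => hemp.elim i⟩
  obtain ⟨j0⟩ := hne
  have hconst : ∀ i, w i = w j0 := by
    intro i
    set S : Finset (Fin n) := Finset.univ.filter (fun j => w j = w j0) with hS
    have hj0S : j0 ∈ S := by simp [hS]
    by_cases hSu : S = Finset.univ
    · have : i ∈ S := hSu ▸ Finset.mem_univ i
      simpa [hS] using this
    · exfalso
      obtain ⟨a, haS, b, hbS, hab⟩ := hirr S ⟨j0, hj0S⟩ hSu
      have hanb : a ≠ b := fun h => haS (h ▸ hbS)
      have : w a = w b := hww a b hanb hab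
      apply haS
      simp only [hS, Finset.mem_filter, Finset.mem_univ, true_and] at hbS ⊢
      rw [this, hbS]
  refine ⟨Real.exp (w j0), Real.exp_pos _, fun i => ?_⟩
  have h1 : Real.exp (w i) = x i / u i := Real.exp_log (div_pos (hx i) (hu i))
  rw [← hconst i, h1, div_mul_cancel₀ _ (ne_of_gt (hu i))]

section assembly
variable {n : ℕ}

lemma B_entry (A : Matrix (Fin n) (Fin n) ℝ) (q : Fin n → ℝ) (ν : ℝ) {i j : Fin n}
    (hij : i ≠ j) : (ν • A + Matrix.diagonal q) i j = ν * A i j := by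
  simp [Matrix.add_apply, Matrix.smul_apply, Matrix.diagonal_apply_ne _ hij]

lemma B_qp {A : Matrix (Fin n) (Fin n) ℝ} (hA_qp : ∀ i j, i ≠ j → 0 ≤ A i j)
    (q : Fin n → ℝ) {ν : ℝ} (hν : 0 < ν) :
    ∀ i j, i ≠ j → 0 ≤ (ν • A + Matrix.diagonal q) i j := by
  intro i j hij
  rw [B_entry A q ν hij]
  exact mul_nonneg (le_of_lt hν) (hA_qp i j hij)

lemma B_irr {A : Matrix (Fin n) (Fin n) ℝ} (hA_irr : MatIrreducible A)
    (q : Fin n → ℝ) {ν : ℝ} (hν : 0 < ν) :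
    MatIrreducible (ν • A + Matrix.diagonal q) := by
  intro S hS hSne
  obtain ⟨i, hiS, j, hjS, hij⟩ := hA_irr S hS hSne
  have hne : i ≠ j := fun h => hiS (h ▸ hjS)
  refine ⟨i, hiS, j, hjS, ?_⟩
  rw [B_entry A q ν hne]
  exact mul_ne_zero (ne_of_gt hν) hij

lemma B_mulVec (A : Matrix (Fin n) (Fin n) ℝ) (q : Fin n → ℝ) (ν : ℝ) (x : Fin n → ℝ)
    (i : Fin n) : ((ν • A + Matrix.diagonal q) *ᵥ x) i = ν * (A *ᵥ x) i + q i * x i := by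
  rw [Matrix.add_mulVec, Matrix.smul_mulVec]
  simp [Matrix.mulVec_diagonal]

lemma key_ineq (hn : 0 < n) {A : Matrix (Fin n) (Fin n) ℝ}
    (hA_qp : ∀ i j, i ≠ j → 0 ≤ A i j) (hA_irr : MatIrreducible A) (q : Fin n → ℝ)
    {μ₁ μ₂ t : ℝ} (h1 : 0 < μ₁) (h2 : 0 < μ₂) (ht0 : 0 < t) (ht1 : t < 1) :
    specBound ((t * μ₁ + (1 - t) * μ₂) • A + Matrix.diagonal q) ≤
        t * specBound (μ₁ • A + Matrix.diagonal q)
          + (1 - t) * specBound (μ₂ • A + Matrix.diagonal q) ∧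
      (μ₁ ≠ μ₂ →
        specBound ((t * μ₁ + (1 - t) * μ₂) • A + Matrix.diagonal q) =
          t * specBound (μ₁ • A + Matrix.diagonal q)
            + (1 - t) * specBound (μ₂ • A + Matrix.diagonal q) →
        ∀ i j, q i = q j) := by
  classical
  haveI : Nonempty (Fin n) := Fin.pos_iff_nonempty.mp hn
  obtain ⟨i0⟩ := (inferInstance : Nonempty (Fin n))
  have ht1' : 0 < 1 - t := by linarith
  set μ : ℝ := t * μ₁ + (1 - t) * μ₂ with hμdef
  have hμ : 0 < μ := by positivity
  -- Perron data at μ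
  obtain ⟨s, u, v, hu, hv, hBu, hBv, hdom⟩ :=
    pf_quasi hn (B_qp hA_qp q hμ) (B_irr hA_irr q hμ)
  have hu0 : u ≠ 0 := fun h => absurd (congrFun h i0) (ne_of_gt (hu i0))
  have hsμ : specBound (μ • A + Matrix.diagonal q) = s := specBound_eq hu hu0 hBu hdom
  -- Perron data at μ₁, μ₂
  obtain ⟨s₁, u₁, v₁, hu₁, hv₁, hBu₁, hBv₁, hdom₁⟩ :=
    pf_quasi hn (B_qp hA_qp q h1) (B_irr hA_irr q h1)
  have hu₁0 : u₁ ≠ 0 := fun h => absurd (congrFun h i0) (ne_of_gt (hu₁ i0))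
  have hs₁ : specBound (μ₁ • A + Matrix.diagonal q) = s₁ := specBound_eq hu₁ hu₁0 hBu₁ hdom₁
  obtain ⟨s₂, u₂, v₂, hu₂, hv₂, hBu₂, hBv₂, hdom₂⟩ :=
    pf_quasi hn (B_qp hA_qp q h2) (B_irr hA_irr q h2)
  have hu₂0 : u₂ ≠ 0 := fun h => absurd (congrFun h i0) (ne_of_gt (hu₂ i0))
  have hs₂ : specBound (μ₂ • A + Matrix.diagonal q) = s₂ := specBound_eq hu₂ hu₂0 hBu₂ hdom₂
  rw [hsμ, hs₁, hs₂]
  -- the DV functional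
  set p : Fin n → ℝ := fun i => v i * u i with hp
  have hppos : ∀ i, 0 < p i := fun i => mul_pos (hv i) (hu i)
  set P : ℝ := ∑ i, p i with hP
  have hPpos : 0 < P := Finset.sum_pos (fun i _ => hppos i) Finset.univ_nonempty
  set Qp : ℝ := ∑ i, p i * q i with hQp
  set H : (Fin n → ℝ) → ℝ := fun x => ∑ i, p i * ((A *ᵥ x) i / x i) with hH
  -- identity
  have hiden : ∀ (ν : ℝ) (x : Fin n → ℝ), (∀ i, 0 < x i) →
      ∑ i, p i * (((ν • A + Matrix.diagonal q) *ᵥ x) i / x i) = ν * H x + Qp := by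
    intro ν x hx
    have h1' : ∀ i, p i * (((ν • A + Matrix.diagonal q) *ᵥ x) i / x i)
        = ν * (p i * ((A *ᵥ x) i / x i)) + p i * q i := by
      intro i
      rw [B_mulVec A q ν x i, add_div, mul_div_assoc,
        mul_div_cancel_right₀ _ (ne_of_gt (hx i))]
      ring
    rw [Finset.sum_congr rfl fun i _ => h1' i, Finset.sum_add_distrib, hH, hQp,
      Finset.mul_sum]
  -- lower bound for H
  have hbdd : BddBelow (H '' {x | ∀ i, 0 < x i}) := by
    refine ⟨∑ i, p i * A i i, ?_⟩
    rintro y ⟨x, hx, rfl⟩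
    refine Finset.sum_le_sum fun i _ => ?_
    refine mul_le_mul_of_nonneg_left ?_ (le_of_lt (hppos i))
    rw [le_div_iff₀ (hx i)]
    have hsum : (A *ᵥ x) i = A i i * x i + ∑ j ∈ Finset.univ.erase i, A i j * x j := by
      simp only [Matrix.mulVec, dotProduct]
      rw [← Finset.add_sum_erase _ _ (Finset.mem_univ i)]
    rw [hsum]
    have : 0 ≤ ∑ j ∈ Finset.univ.erase i, A i j * x j :=
      Finset.sum_nonneg fun j hj =>
        mul_nonneg (hA_qp i j (Ne.symm (Finset.mem_erase.mp hj).1)) (le_of_lt (hx j))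
    linarith
  have hne : (H '' {x | ∀ i, 0 < x i}).Nonempty := ⟨H u, ⟨u, hu, rfl⟩⟩
  set c : ℝ := sInf (H '' {x | ∀ i, 0 < x i}) with hc
  -- DV lower bound: for every positive x, s * P ≤ μ * H x + Qp
  have hdv : ∀ x : Fin n → ℝ, (hx : ∀ i, 0 < x i) →
      s * P ≤ μ * H x + Qp := by
    intro x hx
    have := (dv (B_qp hA_qp q hμ) (B_irr hA_irr q hμ) hu hv hx hBu hBv).1
    rwa [hiden μ x hx] at this
  have hcge : s * P ≤ μ * c + Qp := by
    have h1' : (s * P - Qp) / μ ≤ c := by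
      refine le_csInf hne ?_
      rintro y ⟨x, hx, rfl⟩
      rw [div_le_iff₀ hμ]
      have := hdv x hx
      linarith [mul_comm μ (H x)]
    have := (div_le_iff₀ hμ).mp h1'
    linarith [mul_comm c μ]
  -- upper bounds at μ₁ μ₂
  have hupper : ∀ (ν : ℝ) (hν : 0 < ν) (sν : ℝ) (uν : Fin n → ℝ) (huν : ∀ i, 0 < uν i),
      ((ν • A + Matrix.diagonal q) *ᵥ uν = sν • uν) → ν * H uν + Qp = sν * P := by
    intro ν hν sν uν huν heig
    rw [← hiden ν uν huν]
    have h1' : ∀ i, p i * (((ν • A + Matrix.diagonal q) *ᵥ uν) i / uν i) = p i * sν := by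
      intro i
      have := congrFun heig i
      simp only [Pi.smul_apply, smul_eq_mul] at this
      rw [this, mul_div_assoc, div_self (ne_of_gt (huν i)), mul_one]
    rw [Finset.sum_congr rfl fun i _ => h1' i, ← Finset.sum_mul, hP]
    ring
  have hcle₁ : μ₁ * c + Qp ≤ s₁ * P := by
    have hcH := mul_le_mul_of_nonneg_left (csInf_le hbdd ⟨u₁, hu₁, rfl⟩) (le_of_lt h1)
    have := hupper μ₁ h1 s₁ u₁ hu₁ hBu₁
    linarith
  have hcle₂ : μ₂ * c + Qp ≤ s₂ * P := by
    have hcH := mul_le_mul_of_nonneg_left (csInf_le hbdd ⟨u₂, hu₂, rfl⟩) (le_of_lt h2)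
    have := hupper μ₂ h2 s₂ u₂ hu₂ hBu₂
    linarith
  have hmain : s ≤ t * s₁ + (1 - t) * s₂ := by
    have hsum : μ * c + Qp = t * (μ₁ * c + Qp) + (1 - t) * (μ₂ * c + Qp) := by
      rw [hμdef]; ring
    have : s * P ≤ (t * s₁ + (1 - t) * s₂) * P := by
      calc s * P ≤ μ * c + Qp := hcge
        _ = t * (μ₁ * c + Qp) + (1 - t) * (μ₂ * c + Qp) := hsum
        _ ≤ t * (s₁ * P) + (1 - t) * (s₂ * P) := by
            have e1 := mul_le_mul_of_nonneg_left hcle₁ (le_of_lt ht0)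
            have e2 := mul_le_mul_of_nonneg_left hcle₂ (le_of_lt ht1')
            linarith
        _ = (t * s₁ + (1 - t) * s₂) * P := by ring
    exact le_of_mul_le_mul_right this hPpos
  refine ⟨hmain, fun hμne heq => ?_⟩
  -- equality analysis
  have hXY : μ₁ * c + Qp = s₁ * P ∧ μ₂ * c + Qp = s₂ * P ∧ μ * c + Qp = s * P := by
    have hsum : μ * c + Qp = t * (μ₁ * c + Qp) + (1 - t) * (μ₂ * c + Qp) := by
      rw [hμdef]; ring
    have e1 := mul_le_mul_of_nonneg_left hcle₁ (le_of_lt ht0)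
    have e2 := mul_le_mul_of_nonneg_left hcle₂ (le_of_lt ht1')
    have eP : s * P = t * (s₁ * P) + (1 - t) * (s₂ * P) := by rw [heq]; ring
    have hXe : t * (μ₁ * c + Qp) = t * (s₁ * P) := by linarith
    have hYe : (1 - t) * (μ₂ * c + Qp) = (1 - t) * (s₂ * P) := by linarith
    exact ⟨mul_left_cancel₀ (ne_of_gt ht0) hXe,
      mul_left_cancel₀ (ne_of_gt ht1') hYe, by linarith⟩
  obtain ⟨hX₁, hX₂, hXμ⟩ := hXY
  -- c = H u₁ and c = H u₂, and DV equality at u₁ u₂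
  have heqd : ∀ (ν : ℝ) (hν : 0 < ν) (sν : ℝ) (uν : Fin n → ℝ) (huν : ∀ i, 0 < uν i),
      ((ν • A + Matrix.diagonal q) *ᵥ uν = sν • uν) → (ν * c + Qp = sν * P) →
      ∃ d : ℝ, 0 < d ∧ ∀ i, uν i = d * u i := by
    intro ν hν sν uν huν heig hXν
    have hcH : c ≤ H uν := csInf_le hbdd ⟨uν, huν, rfl⟩
    have hup := hupper ν hν sν uν huν heig
    have hcHeq : c = H uν := by
      refine mul_left_cancel₀ (ne_of_gt hν) ?_
      have hle := mul_le_mul_of_nonneg_left hcH (le_of_lt hν)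
      linarith
    have hdveq : s * P = μ * H uν + Qp := by
      have hle := hdv uν huν
      rw [← hcHeq]
      rw [← hcHeq] at hle
      linarith [hXμ]
    refine (dv (B_qp hA_qp q hμ) (B_irr hA_irr q hμ) hu hv huν hBu hBv).2 ?_
    rw [hiden μ uν huν]
    exact hdveq
  obtain ⟨d₁, hd₁, hu₁u⟩ := heqd μ₁ h1 s₁ u₁ hu₁ hBu₁ hX₁
  obtain ⟨d₂, hd₂, hu₂u⟩ := heqd μ₂ h2 s₂ u₂ hu₂ hBu₂ hX₂
  -- u is an eigenvector of both B₁ and B₂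
  have heig : ∀ (ν : ℝ) (sν : ℝ) (uν : Fin n → ℝ) (d : ℝ), 0 < d →
      (∀ i, uν i = d * u i) → ((ν • A + Matrix.diagonal q) *ᵥ uν = sν • uν) →
      ∀ i, ν * (A *ᵥ u) i + q i * u i = sν * u i := by
    intro ν sν uν d hd huνu heig i
    have h1' := congrFun heig i
    rw [B_mulVec A q ν uν i] at h1'
    simp only [Pi.smul_apply, smul_eq_mul] at h1'
    have huνe : uν = d • u := funext fun i => by rw [huνu i]; rfl
    rw [huνe] at h1'
    have hAd : (A *ᵥ (d • u)) i = d * (A *ᵥ u) i := by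
      rw [Matrix.mulVec_smul]
      rfl
    rw [hAd] at h1'
    simp only [Pi.smul_apply, smul_eq_mul] at h1'
    have : d * (ν * (A *ᵥ u) i + q i * u i) = d * (sν * u i) := by linear_combination h1'
    exact mul_left_cancel₀ (ne_of_gt hd) this
  have he₁ := heig μ₁ s₁ u₁ d₁ hd₁ hu₁u hBu₁
  have he₂ := heig μ₂ s₂ u₂ d₂ hd₂ hu₂u hBu₂
  -- derive q constant
  set α : ℝ := (s₁ - s₂) / (μ₁ - μ₂) with hα
  have hμ12 : μ₁ - μ₂ ≠ 0 := sub_ne_zero.mpr hμne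
  have hAu : ∀ i, (A *ᵥ u) i = α * u i := by
    intro i
    have h3 : (μ₁ - μ₂) * (A *ᵥ u) i = (s₁ - s₂) * u i := by
      linear_combination (he₁ i) - (he₂ i)
    rw [hα]
    field_simp
    linear_combination h3
  have hqconst : ∀ i, q i = s₁ - μ₁ * α := by
    intro i
    have e1 := he₁ i
    rw [hAu i] at e1
    have : q i * u i = (s₁ - μ₁ * α) * u i := by linear_combination e1
    exact mul_right_cancel₀ (ne_of_gt (hu i)) this
  intro i j
  rw [hqconst i, hqconst j]
end assembly

/-- For an irreducible quasi-positive matrix `A` and `Q = diagonal q`, the map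
`μ ↦ s(μA + Q)` is convex on `(0,∞)`, and strictly convex there if and only if the `q i`
are not all equal. -/
theorem stmt7 {n : ℕ} (A : Matrix (Fin n) (Fin n) ℝ)
    (hA_qp : ∀ i j, i ≠ j → 0 ≤ A i j)
    (hA_irr : MatIrreducible A)
    (q : Fin n → ℝ) :
    ConvexOn ℝ (Set.Ioi 0)
      (fun μ : ℝ => specBound (μ • A + Matrix.diagonal q)) ∧
    (StrictConvexOn ℝ (Set.Ioi 0)
        (fun μ : ℝ => specBound (μ • A + Matrix.diagonal q)) ↔
      ¬ ∀ i j, q i = q j) := by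
  classical
  rcases Nat.eq_zero_or_pos n with hn0 | hn
  · -- trivial case n = 0
    subst hn0
    have hspec : ∀ M : Matrix (Fin 0) (Fin 0) ℝ, specBound M = 0 := by
      intro M
      have hempty : spectrum ℂ (M.map Complex.ofReal) = ∅ := by
        ext z
        simp only [Set.mem_empty_iff_false, iff_false]
        intro hz
        rw [spectrum.mem_iff] at hz
        exact hz (by
          have : (algebraMap ℂ (Matrix (Fin 0) (Fin 0) ℂ) z - M.map Complex.ofReal) = 1 :=
            Subsingleton.elim _ _
          rw [this]; exact isUnit_one)
      rw [specBound, hempty]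
      simp [Real.sSup_empty]
    have hfun : (fun μ : ℝ => specBound (μ • A + Matrix.diagonal q)) = fun _ => (0 : ℝ) :=
      funext fun μ => hspec _
    rw [hfun]
    refine ⟨convexOn_const 0 (convex_Ioi 0), ?_⟩
    have hq : ∀ i j : Fin 0, q i = q j := fun i => i.elim0
    constructor
    · intro hS
      exfalso
      have h2' := hS.2
      have := h2' (x := 1) (Set.mem_Ioi.mpr one_pos) (y := 2) (Set.mem_Ioi.mpr two_pos)
        (by norm_num) (a := 1/2) (b := 1/2) (by norm_num) (by norm_num) (by norm_num)
      simp at this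
    · intro h
      exact absurd hq h
  · -- main case
    haveI : Nonempty (Fin n) := Fin.pos_iff_nonempty.mp hn
    obtain ⟨i0⟩ := (inferInstance : Nonempty (Fin n))
    constructor
    · refine ⟨convex_Ioi 0, ?_⟩
      intro x hx y hy a b ha hb hab
      simp only [smul_eq_mul]
      rcases eq_or_lt_of_le ha with ha0 | ha0
      · have hb1 : b = 1 := by linarith
        rw [← ha0, hb1]; simp
      rcases eq_or_lt_of_le hb with hb0 | hb0
      · have ha1 : a = 1 := by linarith
        rw [← hb0, ha1]; simp
      have hb' : b = 1 - a := by linarith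
      have ha1 : a < 1 := by linarith
      subst hb'
      exact (key_ineq hn hA_qp hA_irr q (Set.mem_Ioi.mp hx) (Set.mem_Ioi.mp hy) ha0 ha1).1
    constructor
    · -- strict convex → q not constant
      intro hS hq
      -- q is constant; specBound is affine; contradiction
      set c0 : ℝ := q i0 with hc0
      obtain ⟨sA, uA, vA, huA, hvA, hAu, hAv, hdomA⟩ := pf_quasi hn hA_qp hA_irr
      have huA0 : uA ≠ 0 := fun h => absurd (congrFun h i0) (ne_of_gt (huA i0))
      have hfval : ∀ μ : ℝ, 0 < μ →
          specBound (μ • A + Matrix.diagonal q) = μ * sA + c0 := by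
        intro μ hμ
        refine specBound_eq huA huA0 ?_ ?_
        · funext i
          rw [B_mulVec A q μ uA i]
          have h1 : (A *ᵥ uA) i = sA * uA i := by
            have := congrFun hAu i
            simpa using this
          rw [h1, hq i i0, ← hc0]
          simp only [Pi.smul_apply, smul_eq_mul]
          ring
        · intro z hz
          obtain ⟨w, hw0, hweq⟩ := (mem_cspec_iff' _ z).mp hz
          have hμc : (μ : ℂ) ≠ 0 := Complex.ofReal_ne_zero.mpr (ne_of_gt hμ)
          have hAspec : ((z - c0) / μ) ∈ spectrum ℂ (A.map Complex.ofReal) := by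
            rw [mem_cspec_iff']
            refine ⟨w, hw0, fun i => ?_⟩
            have hBij : ∀ j, ((μ • A + Matrix.diagonal q) i j : ℂ)
                = (μ : ℂ) * (A i j : ℂ) + if i = j then (c0 : ℂ) else 0 := by
              intro j
              rcases eq_or_ne i j with rfl | hij
              · rw [Matrix.add_apply, Matrix.smul_apply, Matrix.diagonal_apply_eq,
                  smul_eq_mul, hq i i0, ← hc0, if_pos rfl]
                push_cast
                ring
              · rw [Matrix.add_apply, Matrix.smul_apply, Matrix.diagonal_apply_ne _ hij,
                  smul_eq_mul, if_neg hij]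
                push_cast
                ring
            have hterm : ∀ j, ((μ • A + Matrix.diagonal q) i j : ℂ) * w j
                = (μ : ℂ) * ((A i j : ℂ) * w j) + (if i = j then (c0 : ℂ) else 0) * w j := by
              intro j
              rw [hBij j, add_mul, mul_assoc]
            have h2 : (μ : ℂ) * (∑ j, (A i j : ℂ) * w j) + (c0 : ℂ) * w i = z * w i := by
              have h3 : ∑ j, ((μ • A + Matrix.diagonal q) i j : ℂ) * w j
                  = (μ : ℂ) * (∑ j, (A i j : ℂ) * w j) + (c0 : ℂ) * w i := by
                rw [Finset.sum_congr rfl fun j _ => hterm j, Finset.sum_add_distrib,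
                  ← Finset.mul_sum]
                congr 1
                simp [ite_mul]
              rw [← h3]
              exact hweq i
            field_simp
            linear_combination h2
          have hre := hdomA _ hAspec
          have hz' : z = ((z - c0) / μ) * (μ : ℂ) + c0 := by
            rw [div_mul_cancel₀ _ hμc]
            ring
          have hzre : z.re = ((z - c0) / μ).re * μ + c0 := by
            conv_lhs => rw [hz']
            simp [Complex.add_re, Complex.mul_re, Complex.ofReal_re, Complex.ofReal_im]
          rw [hzre]
          have := mul_le_mul_of_nonneg_right hre (le_of_lt hμ)
          linarith
      have h2' := hS.2
      have h3 := h2' (x := 1) (Set.mem_Ioi.mpr one_pos) (y := 2) (Set.mem_Ioi.mpr two_pos)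
        (by norm_num) (a := 1/2) (b := 1/2) (by norm_num) (by norm_num) (by norm_num)
      simp only [smul_eq_mul] at h3
      have he : (1/2 : ℝ) * (1:ℝ) + (1/2 : ℝ) * (2:ℝ) = 3/2 := by norm_num
      rw [he, hfval 1 one_pos, hfval 2 two_pos, hfval (3/2) (by norm_num)] at h3
      linarith
    · -- q not constant → strict convex
      intro hq
      refine ⟨convex_Ioi 0, ?_⟩
      intro x hx y hy hxy a b ha hb hab
      simp only [smul_eq_mul]
      have hb' : b = 1 - a := by linarith
      have ha1 : a < 1 := by linarith
      subst hb'
      obtain ⟨hle, heqc⟩ := key_ineq hn hA_qp hA_irr q (Set.mem_Ioi.mp hx)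
        (Set.mem_Ioi.mp hy) ha ha1
      refine lt_of_le_of_ne hle fun heq => hq (heqc hxy heq)
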